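/- Let d ≥ 2, let n be a real number with n ≥ d, and let v : ℝ^d → ℝ be a positive C³ function satisfying Δv = P at every point, where P := (1/v)·((n/2)‖∇v‖² + c_n). Then for every real number t and every point of ℝ^d, div( P^(t-1)·v^(2-n)·∇P ) ≥ (t - 1/2)·P^(t-2)·v^(2-n)·‖∇P‖² + ((n-d)/n)·P^(t+1)·v^(1-n), where div denotes the Euclidean divergence. -/

import Mathlib

open MeasureTheory Metric

/-- The Euclidean Laplacian: the trace of the Hessian. -/
noncomputable def lap {d : ℕ} (u : EuclideanSpace ℝ (Fin d) → ℝ)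
    (x : EuclideanSpace ℝ (Fin d)) : ℝ :=
  ∑ i, iteratedFDeriv ℝ 2 u x ![EuclideanSpace.single i 1, EuclideanSpace.single i 1]

/-- The Euclidean divergence of a vector field. -/
noncomputable def diverg {d : ℕ} (V : EuclideanSpace ℝ (Fin d) → EuclideanSpace ℝ (Fin d))
    (x : EuclideanSpace ℝ (Fin d)) : ℝ :=
  ∑ i, fderiv ℝ V x (EuclideanSpace.single i 1) i

/-- The squared Frobenius norm of the Hessian: the sum of the squares of all
second partial derivatives. -/
noncomputable def hessNormSq {d : ℕ} (v : EuclideanSpace ℝ (Fin d) → ℝ)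
    (x : EuclideanSpace ℝ (Fin d)) : ℝ :=
  ∑ i, ∑ j,
    (iteratedFDeriv ℝ 2 v x ![EuclideanSpace.single i 1, EuclideanSpace.single j 1]) ^ 2

/-- The constant `c_n`: `2/(n-2)` for `n > 2` and `1/2` for `n = 2`. -/
noncomputable def cExp (n : ℝ) : ℝ := if 2 < n then 2 / (n - 2) else 1 / 2

/-
With `f = P^(t-1) v^(2-n)` one has `div (f ∇P) = f ΔP + ⟨∇f, ∇P⟩`. Differentiating
`v P = (n/2) |∇v|² + c_n` gives `v ∇P + P ∇v = n D²v ∇v`; differentiating once more and using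
`Δv = P` gives `v ΔP = n |D²v|² + (n-2) ⟨∇v, ∇P⟩ - P²`, and the `⟨∇v, ∇P⟩` terms cancel in the
divergence. What remains is the pointwise estimate `n P |D²v|² ≥ (v/2) |∇P|² + ((2n-d)/n) P³`.
Substituting `∇P` from the first identity, it follows from `|D²v|² ≥ (Δv)²/d` and from
`|n B - P Π|² ≥ 0`, where `B = |∇v|² D²v - ∇v ⊗ (D²v ∇v)` and `Π = |∇v|² I - ∇v ⊗ ∇v`.
-/

open Finset Matrix

section PartialDeriv

variable {d : ℕ} {u f g : EuclideanSpace ℝ (Fin d) → ℝ} {x : EuclideanSpace ℝ (Fin d)}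

noncomputable def partialDeriv (i : Fin d) (u : EuclideanSpace ℝ (Fin d) → ℝ)
    (x : EuclideanSpace ℝ (Fin d)) : ℝ :=
  fderiv ℝ u x (EuclideanSpace.single i 1)

theorem gradient_apply_eq_partialDeriv (u : EuclideanSpace ℝ (Fin d) → ℝ)
    (x : EuclideanSpace ℝ (Fin d)) (i : Fin d) : gradient u x i = partialDeriv i u x := by
  have h := inner_gradient_left (f := u) (x := x) (y := EuclideanSpace.single i (1 : ℝ))
  rwa [EuclideanSpace.inner_single_right, conj_trivial, one_mul] at h

theorem norm_gradient_sq (u : EuclideanSpace ℝ (Fin d) → ℝ) (x : EuclideanSpace ℝ (Fin d)) :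
    ‖gradient u x‖ ^ 2 = ∑ i, partialDeriv i u x ^ 2 := by
  simp [EuclideanSpace.real_norm_sq_eq, gradient_apply_eq_partialDeriv]

theorem ContDiff.partialDeriv {k m : WithTop ℕ∞} (hu : ContDiff ℝ m u) (hkm : k + 1 ≤ m)
    (i : Fin d) : ContDiff ℝ k (partialDeriv i u) :=
  (hu.fderiv_right hkm).clm_apply contDiff_const

theorem inner_gradient_eq_sum (f g : EuclideanSpace ℝ (Fin d) → ℝ) (x : EuclideanSpace ℝ (Fin d)) :
    inner ℝ (gradient f x) (gradient g x) = ∑ i, partialDeriv i f x * partialDeriv i g x := by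
  simp only [PiLp.inner_apply, RCLike.inner_apply, conj_trivial, gradient_apply_eq_partialDeriv,
    mul_comm]

theorem partialDeriv_mul (hf : DifferentiableAt ℝ f x) (hg : DifferentiableAt ℝ g x)
    (i : Fin d) :
    partialDeriv i (fun y => f y * g y) x =
      f x * partialDeriv i g x + g x * partialDeriv i f x := by
  simp [partialDeriv, fderiv_fun_mul hf hg]

theorem partialDeriv_add (hf : DifferentiableAt ℝ f x) (hg : DifferentiableAt ℝ g x) (i : Fin d) :
    partialDeriv i (fun y => f y + g y) x = partialDeriv i f x + partialDeriv i g x := by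
  simp [partialDeriv, fderiv_fun_add hf hg]

theorem partialDeriv_add_const (c : ℝ) (i : Fin d) :
    partialDeriv i (fun y => f y + c) x = partialDeriv i f x := by
  simp [partialDeriv, fderiv_add_const]

theorem partialDeriv_const_mul (hf : DifferentiableAt ℝ f x) (c : ℝ) (i : Fin d) :
    partialDeriv i (fun y => c * f y) x = c * partialDeriv i f x := by
  simp [partialDeriv, fderiv_const_mul hf]

theorem partialDeriv_sum {ι : Type*} (s : Finset ι) {F : ι → EuclideanSpace ℝ (Fin d) → ℝ}
    (hF : ∀ k ∈ s, DifferentiableAt ℝ (F k) x) (i : Fin d) :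
    partialDeriv i (fun y => ∑ k ∈ s, F k y) x = ∑ k ∈ s, partialDeriv i (F k) x := by
  simp [partialDeriv, fderiv_fun_sum hF]

theorem partialDeriv_sq (hf : DifferentiableAt ℝ f x) (i : Fin d) :
    partialDeriv i (fun y => f y ^ 2) x = 2 * f x * partialDeriv i f x := by
  simp [partialDeriv, fderiv_fun_pow 2 hf, mul_assoc]

theorem partialDeriv_rpow_const (hf : DifferentiableAt ℝ f x) (hx : 0 < f x) (r : ℝ) (i : Fin d) :
    partialDeriv i (fun y => f y ^ r) x = r * f x ^ (r - 1) * partialDeriv i f x := by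
  simp [partialDeriv, (hf.hasFDerivAt.rpow_const (p := r) (Or.inl hx.ne')).fderiv]

theorem partialDeriv_partialDeriv (hu : DifferentiableAt ℝ (fderiv ℝ u) x) (i j : Fin d) :
    partialDeriv i (partialDeriv j u) x =
      fderiv ℝ (fderiv ℝ u) x (EuclideanSpace.single i 1) (EuclideanSpace.single j 1) := by
  change fderiv ℝ (fun y => fderiv ℝ u y (EuclideanSpace.single j 1)) x _ = _
  simp [fderiv_clm_apply hu (differentiableAt_const _)]

theorem partialDeriv_comm (hu : ContDiff ℝ 2 u) (i j : Fin d) :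
    partialDeriv i (partialDeriv j u) = partialDeriv j (partialDeriv i u) := by
  ext x
  have hdiff : DifferentiableAt ℝ (fderiv ℝ u) x :=
    (hu.fderiv_right (m := 1) le_rfl).differentiable one_ne_zero x
  rw [partialDeriv_partialDeriv hdiff, partialDeriv_partialDeriv hdiff,
    (hu.contDiffAt.isSymmSndFDerivAt (by simp)).eq]

theorem lap_eq_sum_partialDeriv (hu : ContDiff ℝ 2 u) (x : EuclideanSpace ℝ (Fin d)) :
    lap u x = ∑ i, partialDeriv i (partialDeriv i u) x := by
  have hdiff : DifferentiableAt ℝ (fderiv ℝ u) x :=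
    (hu.fderiv_right (m := 1) le_rfl).differentiable one_ne_zero x
  simp [lap, iteratedFDeriv_two_apply, partialDeriv_partialDeriv hdiff]

theorem diverg_eq_sum_partialDeriv {V : EuclideanSpace ℝ (Fin d) → EuclideanSpace ℝ (Fin d)}
    (hV : DifferentiableAt ℝ V x) : diverg V x = ∑ i, partialDeriv i (fun y => V y i) x := by
  refine sum_congr rfl fun i _ => ?_
  have := ((EuclideanSpace.proj (𝕜 := ℝ) i).hasFDerivAt.comp x hV.hasFDerivAt).fderiv
  exact (congrArg (· (EuclideanSpace.single i 1)) this).symm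

theorem hessNormSq_eq_sum (hu : ContDiff ℝ 2 u) (x : EuclideanSpace ℝ (Fin d)) :
    hessNormSq u x = ∑ i, ∑ j, partialDeriv i (partialDeriv j u) x ^ 2 := by
  have hdiff : DifferentiableAt ℝ (fderiv ℝ u) x :=
    (hu.fderiv_right (m := 1) le_rfl).differentiable one_ne_zero x
  simp [hessNormSq, iteratedFDeriv_two_apply, partialDeriv_partialDeriv hdiff]

theorem partialDeriv_lap (hu : ContDiff ℝ 3 u) (i : Fin d) (x : EuclideanSpace ℝ (Fin d)) :
    partialDeriv i (lap u) x = lap (partialDeriv i u) x := by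
  have hlap : lap u = fun y => ∑ j, partialDeriv j (partialDeriv j u) y :=
    funext (lap_eq_sum_partialDeriv (hu.of_le (by norm_num)))
  have huj : ∀ j, ContDiff ℝ 2 (partialDeriv j u) := fun j => hu.partialDeriv (by norm_num) j
  have hddu : ∀ j, Differentiable ℝ (partialDeriv j (partialDeriv j u)) := fun j =>
    ((huj j).partialDeriv (k := 1) (by norm_num) j).differentiable one_ne_zero
  rw [hlap, partialDeriv_sum _ fun j _ => hddu j x, lap_eq_sum_partialDeriv (huj i)]
  refine sum_congr rfl fun j _ => ?_
  rw [partialDeriv_comm (huj j), partialDeriv_comm (hu.of_le (by norm_num)) i j]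

theorem diverg_smul_gradient (hf : DifferentiableAt ℝ f x) (hu : ContDiff ℝ 2 u) :
    diverg (fun y => f y • gradient u y) x =
      f x * lap u x + inner ℝ (gradient f x) (gradient u x) := by
  have hgrad : Differentiable ℝ (gradient u) :=
    (InnerProductSpace.toDual ℝ _).symm.differentiable.comp
      ((hu.fderiv_right (m := 1) le_rfl).differentiable one_ne_zero)
  have hcoord : ∀ i, (fun y => (f y • gradient u y) i) = fun y => f y * partialDeriv i u y := by
    intro i; ext y; simp [gradient_apply_eq_partialDeriv]
  have hdu : ∀ i, Differentiable ℝ (partialDeriv i u) := fun i =>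
    (hu.partialDeriv (k := 1) (by norm_num) i).differentiable one_ne_zero
  rw [diverg_eq_sum_partialDeriv (hf.fun_smul (hgrad x)), lap_eq_sum_partialDeriv hu,
    inner_gradient_eq_sum, mul_sum, ← sum_add_distrib]
  refine sum_congr rfl fun i _ => ?_
  rw [hcoord, partialDeriv_mul hf (hdu i x)]
  ring

theorem pos_of_lap_ne_zero (h : lap u x ≠ 0) : 0 < d :=
  Nat.pos_of_ne_zero (by rintro rfl; simp [lap] at h)

end PartialDeriv

section HessianAlgebra

variable {d : ℕ} (A : Matrix (Fin d) (Fin d) ℝ) (g : Fin d → ℝ)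

-- `w` is the `j`-th column of `n (|g|² A - g ⊗ (g ᵥ* A)) - a (|g|² I - g ⊗ g)`.
theorem sum_dotProduct_self_columns_eq (n a : ℝ) :
    ∑ j, (let w : Fin d → ℝ := (n * (g ⬝ᵥ g)) • Aᵀ j - (n * (g ᵥ* A) j - a * g j) • g
        - (a * (g ⬝ᵥ g)) • Pi.single j 1
      w ⬝ᵥ w) =
    (g ⬝ᵥ g) * (n ^ 2 * ((g ⬝ᵥ g) * ∑ i, ∑ j, A i j ^ 2 - (g ᵥ* A) ⬝ᵥ (g ᵥ* A))
      - 2 * n * a * ((g ⬝ᵥ g) * A.trace - (g ᵥ* A) ⬝ᵥ g) + (d - 1) * a ^ 2 * (g ⬝ᵥ g)) := by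
  set G := g ⬝ᵥ g
  set h := g ᵥ* A
  have hcol : ∀ j, g ⬝ᵥ Aᵀ j = h j := fun j => rfl
  have hcolumn : ∀ j, (let w : Fin d → ℝ := (n * G) • Aᵀ j - (n * h j - a * g j) • g
        - (a * G) • Pi.single j 1
      w ⬝ᵥ w) = n ^ 2 * G ^ 2 * (Aᵀ j ⬝ᵥ Aᵀ j) - n ^ 2 * G * (h j * h j) + a ^ 2 * G ^ 2
        - a ^ 2 * G * (g j * g j) - 2 * n * a * G ^ 2 * A j j + 2 * n * a * G * (h j * g j) := by
    intro j
    simp only [sub_dotProduct, dotProduct_sub, smul_dotProduct, dotProduct_smul, smul_eq_mul,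
      dotProduct_single, single_dotProduct, dotProduct_comm _ g, hcol, Pi.sub_apply,
      Pi.smul_apply, Pi.single_eq_same, transpose_apply]
    ring
  have hS : ∑ j, Aᵀ j ⬝ᵥ Aᵀ j = ∑ i, ∑ j, A i j ^ 2 := by
    rw [sum_comm]
    simp [dotProduct, sq]
  rw [sum_congr rfl fun j _ => hcolumn j]
  simp only [sum_add_distrib, sum_sub_distrib, ← mul_sum, sum_const, card_univ, Fintype.card_fin,
    nsmul_eq_mul, hS]
  rw [show ∑ i, h i * h i = h ⬝ᵥ h from rfl, show ∑ i, h i * g i = h ⬝ᵥ g from rfl,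
    show ∑ i, g i * g i = G from rfl, show ∑ i, A i i = A.trace from rfl]
  ring

theorem trace_vecMul_form_nonneg (n a : ℝ) :
    0 ≤ n ^ 2 * ((g ⬝ᵥ g) * ∑ i, ∑ j, A i j ^ 2 - (g ᵥ* A) ⬝ᵥ (g ᵥ* A))
      - 2 * n * a * ((g ⬝ᵥ g) * A.trace - (g ᵥ* A) ⬝ᵥ g) + (d - 1) * a ^ 2 * (g ⬝ᵥ g) := by
  rcases eq_or_ne g 0 with rfl | hg
  · simp
  have hG : 0 < g ⬝ᵥ g := (sum_nonneg fun i _ => mul_self_nonneg (g i)).lt_of_ne'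
    (dotProduct_self_eq_zero.not.mpr hg)
  refine nonneg_of_mul_nonneg_right ?_ hG
  rw [← sum_dotProduct_self_columns_eq]
  exact sum_nonneg fun j _ => sum_nonneg fun i _ => mul_self_nonneg _

theorem sq_trace_le_card_mul_sum_sq : A.trace ^ 2 ≤ d * ∑ i, ∑ j, A i j ^ 2 := by
  calc A.trace ^ 2 ≤ d * ∑ i, A i i ^ 2 := by
        have := sq_sum_le_card_mul_sum_sq (s := univ) (f := fun i => A i i)
        simp only [card_univ, Fintype.card_fin] at this
        exact this
    _ ≤ d * ∑ i, ∑ j, A i j ^ 2 := by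
        gcongr with i
        exact single_le_sum (f := fun j => A i j ^ 2) (fun j _ => sq_nonneg _) (mem_univ i)

theorem estimate_of_smul_add_smul_eq_vecMul {n a V c : ℝ} {p : Fin d → ℝ} (hn : (d : ℝ) ≤ n)
    (ha : 0 < a) (htr : A.trace = a) (hV : 0 < V) (hc : 0 < c)
    (hp : V • p + a • g = n • (g ᵥ* A))
    (hVa : n / 2 * (g ⬝ᵥ g) + c = V * a) :
    V / 2 * (p ⬝ᵥ p) + (2 * n - d) / n * a ^ 3 ≤ n * a * ∑ i, ∑ j, A i j ^ 2 := by
  have hd : 0 < d := Nat.pos_of_ne_zero (by rintro rfl; simp [trace] at htr; linarith)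
  have hn0 : 0 < n := lt_of_lt_of_le (by exact_mod_cast hd) hn
  have hVp : V ^ 2 * (p ⬝ᵥ p) = n ^ 2 * ((g ᵥ* A) ⬝ᵥ (g ᵥ* A)) - 2 * n * a * ((g ᵥ* A) ⬝ᵥ g)
      + a ^ 2 * (g ⬝ᵥ g) := by
    have : V • p = n • (g ᵥ* A) - a • g := eq_sub_of_add_eq hp
    calc V ^ 2 * (p ⬝ᵥ p) = (V • p) ⬝ᵥ (V • p) := by simp [sq, mul_assoc]
      _ = _ := by
        rw [this]
        simp only [sub_dotProduct, dotProduct_sub, smul_dotProduct, dotProduct_smul, smul_eq_mul,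
          dotProduct_comm g]
        ring
  have htrace : (2 * n - d) * a ^ 2 ≤ n ^ 2 * ∑ i, ∑ j, A i j ^ 2 := by
    have := sq_trace_le_card_mul_sum_sq A
    rw [htr] at this
    have hd' : (0 : ℝ) < d := by exact_mod_cast hd
    nlinarith [sq_nonneg (n - d), sq_nonneg a]
  have hbracket := trace_vecMul_form_nonneg A g n a
  rw [htr] at hbracket
  have key : 2 * n * V *
        (n * a * ∑ i, ∑ j, A i j ^ 2 - (V / 2 * (p ⬝ᵥ p) + (2 * n - d) / n * a ^ 3))
      = n * (n ^ 2 * ((g ⬝ᵥ g) * ∑ i, ∑ j, A i j ^ 2 - (g ᵥ* A) ⬝ᵥ (g ᵥ* A))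
          - 2 * n * a * ((g ⬝ᵥ g) * a - (g ᵥ* A) ⬝ᵥ g) + (d - 1) * a ^ 2 * (g ⬝ᵥ g))
        + 2 * c * (n ^ 2 * ∑ i, ∑ j, A i j ^ 2 - (2 * n - d) * a ^ 2) := by
    field_simp
    linear_combination (-n) * hVp - 2 * (n ^ 2 * ∑ i, ∑ j, A i j ^ 2 - (2 * n - d) * a ^ 2) * hVa
  have hpos : 0 ≤ 2 * n * V *
      (n * a * ∑ i, ∑ j, A i j ^ 2 - (V / 2 * (p ⬝ᵥ p) + (2 * n - d) / n * a ^ 3)) := by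
    rw [key]
    exact add_nonneg (mul_nonneg hn0.le hbracket)
      (mul_nonneg (by positivity) (sub_nonneg.mpr htrace))
  exact sub_nonneg.mp (nonneg_of_mul_nonneg_right hpos (by positivity))

end HessianAlgebra

namespace PFunction

variable {d : ℕ} {n c : ℝ} {v P : EuclideanSpace ℝ (Fin d) → ℝ}

theorem mul_eq (hvpos : ∀ x, 0 < v x)
    (hP : ∀ x, P x = 1 / v x * (n / 2 * ‖gradient v x‖ ^ 2 + c)) (x : EuclideanSpace ℝ (Fin d)) :
    v x * P x = n / 2 * ∑ i, partialDeriv i v x ^ 2 + c := by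
  rw [hP, ← norm_gradient_sq]
  field_simp [(hvpos x).ne']

theorem contDiff (hv : ContDiff ℝ 3 v) (hvpos : ∀ x, 0 < v x)
    (hP : ∀ x, P x = 1 / v x * (n / 2 * ‖gradient v x‖ ^ 2 + c)) : ContDiff ℝ 2 P := by
  have hP' : P = fun x => (v x)⁻¹ * (n / 2 * ∑ i, partialDeriv i v x ^ 2 + c) := by
    ext x; rw [hP, one_div, norm_gradient_sq]
  rw [hP']
  exact ((hv.of_le (by norm_num)).inv fun x => (hvpos x).ne').mul <|
    (contDiff_const.mul <| ContDiff.sum fun i _ => (hv.partialDeriv (by norm_num) i).pow 2).add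
      contDiff_const

theorem mul_partialDeriv_add_mul_partialDeriv (hv : ContDiff ℝ 2 v) (hPd : Differentiable ℝ P)
    (hvP : ∀ x, v x * P x = n / 2 * ∑ i, partialDeriv i v x ^ 2 + c) (j : Fin d)
    (x : EuclideanSpace ℝ (Fin d)) :
    v x * partialDeriv j P x + P x * partialDeriv j v x =
      n * ∑ i, partialDeriv i v x * partialDeriv j (partialDeriv i v) x := by
  have hdv : ∀ i, Differentiable ℝ (partialDeriv i v) := fun i =>
    (hv.partialDeriv (k := 1) (by norm_num) i).differentiable one_ne_zero
  calc v x * partialDeriv j P x + P x * partialDeriv j v x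
      = partialDeriv j (fun y => v y * P y) x :=
        (partialDeriv_mul ((hv.differentiable two_ne_zero) x) (hPd x) j).symm
    _ = partialDeriv j (fun y => n / 2 * ∑ i, partialDeriv i v y ^ 2 + c) x := by
        rw [funext hvP]
    _ = n * ∑ i, partialDeriv i v x * partialDeriv j (partialDeriv i v) x := by
        have hsq : ∀ i, DifferentiableAt ℝ (fun y => partialDeriv i v y ^ 2) x := fun i =>
          ((hdv i) x).pow 2
        rw [partialDeriv_add_const, partialDeriv_const_mul (DifferentiableAt.fun_sum fun i _ =>
            hsq i), partialDeriv_sum _ fun i _ => hsq i]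
        simp only [partialDeriv_sq ((hdv _) x), mul_sum]
        exact sum_congr rfl fun i _ => by ring

theorem partialDeriv_mul_partialDeriv_add_mul_partialDeriv (hv : ContDiff ℝ 3 v)
    (hPC : ContDiff ℝ 2 P) (hvP : ∀ x, v x * P x = n / 2 * ∑ i, partialDeriv i v x ^ 2 + c)
    (j : Fin d) (x : EuclideanSpace ℝ (Fin d)) :
    v x * partialDeriv j (partialDeriv j P) x + 2 * (partialDeriv j v x * partialDeriv j P x)
        + P x * partialDeriv j (partialDeriv j v) x
      = n * ∑ i, (partialDeriv i v x * partialDeriv j (partialDeriv j (partialDeriv i v)) x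
        + partialDeriv j (partialDeriv i v) x ^ 2) := by
  have hvd : Differentiable ℝ v := hv.differentiable (by norm_num)
  have hPd : Differentiable ℝ P := hPC.differentiable two_ne_zero
  have hdv : ∀ i, ContDiff ℝ 2 (partialDeriv i v) := fun i => hv.partialDeriv (by norm_num) i
  have hdvd : ∀ i, Differentiable ℝ (partialDeriv i v) := fun i =>
    (hdv i).differentiable two_ne_zero
  have hddv : ∀ i, Differentiable ℝ (partialDeriv j (partialDeriv i v)) := fun i =>
    ((hdv i).partialDeriv (k := 1) (by norm_num) j).differentiable one_ne_zero
  have hdP : Differentiable ℝ (partialDeriv j P) :=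
    (hPC.partialDeriv (k := 1) (by norm_num) j).differentiable one_ne_zero
  have h := congrArg (fun F => partialDeriv j F x)
    (funext (mul_partialDeriv_add_mul_partialDeriv (hv.of_le (by norm_num)) hPd hvP j))
  rw [partialDeriv_add ((hvd x).fun_mul (hdP x)) ((hPd x).fun_mul (hdvd j x)),
    partialDeriv_mul (hvd x) (hdP x), partialDeriv_mul (hPd x) (hdvd j x),
    partialDeriv_const_mul (DifferentiableAt.fun_sum fun i _ => (hdvd i x).fun_mul (hddv i x)),
    partialDeriv_sum _ fun i _ => (hdvd i x).fun_mul (hddv i x)] at h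
  rw [sum_congr rfl fun i _ => partialDeriv_mul (hdvd i x) (hddv i x) j] at h
  simp only [sq]
  linear_combination h

theorem mul_lap_eq (hv : ContDiff ℝ 3 v) (hPC : ContDiff ℝ 2 P)
    (hvP : ∀ x, v x * P x = n / 2 * ∑ i, partialDeriv i v x ^ 2 + c) (heq : ∀ x, lap v x = P x)
    (x : EuclideanSpace ℝ (Fin d)) :
    v x * lap P x = n * hessNormSq v x + (n - 2) * inner ℝ (gradient v x) (gradient P x)
      - P x ^ 2 := by
  have hv2 : ContDiff ℝ 2 v := hv.of_le (by norm_num)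
  have hlapv : ∀ i, lap (partialDeriv i v) x = partialDeriv i P x := fun i => by
    rw [← partialDeriv_lap hv, funext heq]
  calc v x * lap P x = ∑ j, v x * partialDeriv j (partialDeriv j P) x := by
        rw [lap_eq_sum_partialDeriv hPC, mul_sum]
    _ = ∑ j, (n * ∑ i, (partialDeriv i v x * partialDeriv j (partialDeriv j (partialDeriv i v)) x
          + partialDeriv j (partialDeriv i v) x ^ 2)
          - 2 * (partialDeriv j v x * partialDeriv j P x)
          - P x * partialDeriv j (partialDeriv j v) x) :=
        sum_congr rfl fun j _ => by
          linear_combination partialDeriv_mul_partialDeriv_add_mul_partialDeriv hv hPC hvP j x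
    _ = _ := by
        simp only [sum_sub_distrib, ← mul_sum, sum_add_distrib]
        rw [sum_comm, ← lap_eq_sum_partialDeriv hv2, heq]
        simp only [← mul_sum, ← lap_eq_sum_partialDeriv (hv.partialDeriv (by norm_num) _), hlapv]
        rw [hessNormSq_eq_sum hv2, inner_gradient_eq_sum]
        ring

theorem pos (hn : 0 ≤ n) (hc : 0 < c) (hvpos : ∀ x, 0 < v x)
    (hvP : ∀ x, v x * P x = n / 2 * ∑ i, partialDeriv i v x ^ 2 + c)
    (x : EuclideanSpace ℝ (Fin d)) :
    0 < P x :=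
  pos_of_mul_pos_right ((hvP x).symm ▸ by positivity) (hvpos x).le

theorem norm_gradient_sq_le (hn : (d : ℝ) ≤ n) (hc : 0 < c) (hv : ContDiff ℝ 2 v)
    (hPd : Differentiable ℝ P) (hvP : ∀ x, v x * P x = n / 2 * ∑ i, partialDeriv i v x ^ 2 + c)
    (heq : ∀ x, lap v x = P x) {x : EuclideanSpace ℝ (Fin d)} (hvx : 0 < v x) (hPx : 0 < P x) :
    v x / 2 * ‖gradient P x‖ ^ 2 + (2 * n - d) / n * P x ^ 3 ≤ n * P x * hessNormSq v x := by
  set A : Matrix (Fin d) (Fin d) ℝ := of fun i j => partialDeriv i (partialDeriv j v) x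
  set g : Fin d → ℝ := fun i => partialDeriv i v x
  have htr : A.trace = P x := by
    rw [← heq, lap_eq_sum_partialDeriv hv]; rfl
  have hp : v x • (fun j => partialDeriv j P x) + P x • g = n • (g ᵥ* A) := by
    ext j
    simp only [A, g, Pi.add_apply, Pi.smul_apply, smul_eq_mul, vecMul, dotProduct, of_apply,
      mul_partialDeriv_add_mul_partialDeriv hv hPd hvP, partialDeriv_comm hv]
  have hVa : n / 2 * (g ⬝ᵥ g) + c = v x * P x := by
    simp only [g, hvP, dotProduct, sq]
  have := estimate_of_smul_add_smul_eq_vecMul A g hn hPx htr hvx hc hp hVa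
  simpa only [A, hessNormSq_eq_sum hv, norm_gradient_sq, dotProduct, ← sq, of_apply] using this

theorem diverg_eq (hv : ContDiff ℝ 3 v) (hvpos : ∀ x, 0 < v x) (hPC : ContDiff ℝ 2 P)
    (hPpos : ∀ x, 0 < P x) (hvP : ∀ x, v x * P x = n / 2 * ∑ i, partialDeriv i v x ^ 2 + c)
    (heq : ∀ x, lap v x = P x) (t : ℝ) (x : EuclideanSpace ℝ (Fin d)) :
    diverg (fun y => (P y ^ (t - 1) * v y ^ ((2 : ℝ) - n)) • gradient P y) x =
      P x ^ (t - 1) * v x ^ ((1 : ℝ) - n) * (n * hessNormSq v x - P x ^ 2)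
        + (t - 1) * P x ^ (t - 2) * v x ^ ((2 : ℝ) - n) * ‖gradient P x‖ ^ 2 := by
  have hvd : Differentiable ℝ v := hv.differentiable (by norm_num)
  have hPd : Differentiable ℝ P := hPC.differentiable two_ne_zero
  have hPt : Differentiable ℝ fun y => P y ^ (t - 1) := fun y =>
    (hPd y).rpow_const (Or.inl (hPpos y).ne')
  have hvn : Differentiable ℝ fun y => v y ^ ((2 : ℝ) - n) := fun y =>
    (hvd y).rpow_const (Or.inl (hvpos y).ne')
  have hinner : inner ℝ (gradient (fun y => P y ^ (t - 1) * v y ^ ((2 : ℝ) - n)) x) (gradient P x)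
      = (t - 1) * P x ^ (t - 2) * v x ^ ((2 : ℝ) - n) * ‖gradient P x‖ ^ 2
        + (2 - n) * P x ^ (t - 1) * v x ^ ((1 : ℝ) - n) *
          inner ℝ (gradient v x) (gradient P x) := by
    rw [inner_gradient_eq_sum, inner_gradient_eq_sum, norm_gradient_sq, mul_sum, mul_sum,
      ← sum_add_distrib]
    refine sum_congr rfl fun i _ => ?_
    rw [partialDeriv_mul (hPt x) (hvn x), partialDeriv_rpow_const (hPd x) (hPpos x),
      partialDeriv_rpow_const (hvd x) (hvpos x), show t - 1 - 1 = t - 2 by ring,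
      show (2 : ℝ) - n - 1 = 1 - n by ring]
    ring
  have hv2n : v x ^ ((2 : ℝ) - n) = v x ^ ((1 : ℝ) - n) * v x := by
    rw [← Real.rpow_add_one (hvpos x).ne']; ring_nf
  rw [diverg_smul_gradient ((hPt x).fun_mul (hvn x)) hPC, hinner]
  linear_combination (P x ^ (t - 1) * v x ^ ((1 : ℝ) - n)) * mul_lap_eq hv hPC hvP heq x
    + (P x ^ (t - 1) * lap P x) * hv2n

end PFunction

theorem cExp_pos (n : ℝ) : 0 < cExp n := by
  unfold cExp
  split_ifs with h
  · exact div_pos two_pos (sub_pos.mpr h)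
  · norm_num

theorem stmt_8_general (d : ℕ) (n : ℝ) (hn : (d : ℝ) ≤ n)
    (v : EuclideanSpace ℝ (Fin d) → ℝ) (hv : ContDiff ℝ 3 v) (hvpos : ∀ x, 0 < v x)
    (P : EuclideanSpace ℝ (Fin d) → ℝ)
    (hP : ∀ x, P x = (1 / v x) * ((n / 2) * ‖gradient v x‖ ^ 2 + cExp n))
    (heq : ∀ x, lap v x = P x) :
    ∀ (t : ℝ) (x : EuclideanSpace ℝ (Fin d)),
      diverg (fun y => (P y ^ (t - 1) * (v y) ^ ((2 : ℝ) - n)) • gradient P y) x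
      ≥ (t - 1 / 2) * P x ^ (t - 2) * (v x) ^ ((2 : ℝ) - n) * ‖gradient P x‖ ^ 2
        + ((n - (d : ℝ)) / n) * P x ^ (t + 1) * (v x) ^ ((1 : ℝ) - n) := by
  intro t x
  have hvP := PFunction.mul_eq hvpos hP
  have hPC := PFunction.contDiff hv hvpos hP
  have hPpos := PFunction.pos (d.cast_nonneg.trans hn) (cExp_pos n) hvpos hvP
  have hn0 : 0 < n := (Nat.cast_pos.mpr (pos_of_lap_ne_zero (heq x ▸ (hPpos x).ne'))).trans_le hn
  have hest := PFunction.norm_gradient_sq_le hn (cExp_pos n) (hv.of_le (by norm_num))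
    (hPC.differentiable two_ne_zero) hvP heq (hvpos x) (hPpos x)
  have hPt1 : P x ^ (t - 1) = P x ^ (t - 2) * P x := by
    rw [← Real.rpow_add_one (hPpos x).ne']; ring_nf
  have hPt3 : P x ^ (t + 1) = P x ^ (t - 2) * P x ^ 3 := by
    rw [show t + 1 = t - 2 + (3 : ℕ) by push_cast; ring, Real.rpow_add_natCast (hPpos x).ne']
  have hv2n : v x ^ ((2 : ℝ) - n) = v x ^ ((1 : ℝ) - n) * v x := by
    rw [← Real.rpow_add_one (hvpos x).ne']; ring_nf
  have hweight : 0 ≤ P x ^ (t - 2) * v x ^ ((1 : ℝ) - n) :=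
    mul_nonneg (Real.rpow_nonneg (hPpos x).le _) (Real.rpow_nonneg (hvpos x).le _)
  rw [ge_iff_le, PFunction.diverg_eq hv hvpos hPC hPpos hvP heq, hPt1, hPt3, hv2n,
    show (n - d) / n = (2 * n - d) / n - 1 by field_simp; ring]
  nlinarith [mul_nonneg hweight (sub_nonneg.mpr hest)]

/-- Lemma 2.3, Euclidean case: the differential inequality for the P-function. -/
theorem stmt_8 (d : ℕ) (hd : 2 ≤ d) (n : ℝ) (hn : (d : ℝ) ≤ n)
    (v : EuclideanSpace ℝ (Fin d) → ℝ) (hv : ContDiff ℝ 3 v) (hvpos : ∀ x, 0 < v x)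
    (P : EuclideanSpace ℝ (Fin d) → ℝ)
    (hP : ∀ x, P x = (1 / v x) * ((n / 2) * ‖gradient v x‖ ^ 2 + cExp n))
    (heq : ∀ x, lap v x = P x) :
    ∀ (t : ℝ) (x : EuclideanSpace ℝ (Fin d)),
      diverg (fun y => (P y ^ (t - 1) * (v y) ^ ((2 : ℝ) - n)) • gradient P y) x
      ≥ (t - 1 / 2) * P x ^ (t - 2) * (v x) ^ ((2 : ℝ) - n) * ‖gradient P x‖ ^ 2
        + ((n - (d : ℝ)) / n) * P x ^ (t + 1) * (v x) ^ ((1 : ℝ) - n) :=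
  stmt_8_general d n hn v hv hvpos P hP heq
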